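/- arXiv:2210.14277 — 2 statements merged into one kernel-verified Lean document; each statement's English description precedes it below -/
import Mathlib

section
/- Let G be a finite simple graph and C an odd cycle in G of length 2k+1, and let N' be a matching on the contraction G/C. Then there is a matching N on G consisting of the edges corresponding to those of N' together with k edges of the cycle C, such that N/C = N' and |N| = |N'| + k; moreover, if the contracted vertex B is N'-matched, then every vertex of C is N-matched. -/
/-!
Choose the vertex `a` of the cycle that will absorb the contracted vertex `B`: if `N'` matches `B`
to `u`, let `a` be a neighbour of `u` on the cycle, otherwise any vertex of it. Renaming `B` to `a`
turns `N'` into a matching of `G` that meets the cycle at most in `a`. Read from `a`, the cycle is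
`a = c₀, c₁, …, c₂ₖ, c₂ₖ₊₁ = a`, and the edges `c₂ᵢ₊₁c₂ᵢ₊₂` (`i < k`) match every other vertex of
the cycle; their union with the lifted `N'` is the required matching.
-/

/-- A vertex `v` is matched by the edge set `M` if it is an endpoint of some edge of `M`. -/
def Matched {V : Type*} (M : Set (Sym2 V)) (v : V) : Prop := ∃ e ∈ M, v ∈ e

/-- `M` is a matching on `G`: a set of edges of `G`, no two of which share a vertex. -/
def IsMatching {V : Type*} (G : SimpleGraph V) (M : Set (Sym2 V)) : Prop :=
  M ⊆ G.edgeSet ∧ ∀ e ∈ M, ∀ f ∈ M, e ≠ f → ∀ v : V, v ∈ e → v ∉ f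

/-- The contraction `G/C`: the simple graph on `(V ∖ C) ∪ {B}` (with `B = none` the new
vertex) in which two old vertices are adjacent iff they are adjacent in `G`, and `B` is
adjacent to an old vertex `u` iff some vertex of `C` is adjacent to `u` in `G`. -/
def contraction {V : Type*} (G : SimpleGraph V) (C : Set V) :
    SimpleGraph (Option {x : V // x ∉ C}) where
  Adj x y :=
    match x, y with
    | some u, some w => G.Adj u.1 w.1
    | some u, none => ∃ c ∈ C, G.Adj u.1 c
    | none, some w => ∃ c ∈ C, G.Adj w.1 c
    | none, none => False
  symm := by
    constructor
    rintro (_ | u) (_ | w) h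
    · exact h
    · exact h
    · exact h
    · exact G.adj_symm h
  loopless := by
    constructor
    rintro (_ | u) h
    · exact h
    · exact G.irrefl h

/-- The edge set `M/C` induced on `G/C` by an edge set `M` of `G`: the edges of `M` with no
endpoint in `C`, together with the edge `{B, u}` for each edge of `M` with exactly one
endpoint in `C`. -/
def contractEdges {V : Type*} (C : Set V) (M : Set (Sym2 V)) :
    Set (Sym2 (Option {x : V // x ∉ C})) :=
  {e | (∃ (u w : V) (hu : u ∉ C) (hw : w ∉ C),
          s(u, w) ∈ M ∧ e = s(some ⟨u, hu⟩, some ⟨w, hw⟩)) ∨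
       (∃ (u c : V) (hu : u ∉ C), c ∈ C ∧ s(u, c) ∈ M ∧ e = s(none, some ⟨u, hu⟩))}

section

variable {V : Type*} {G : SimpleGraph V}

theorem Matched.mono {M M' : Set (Sym2 V)} (h : M ⊆ M') {x : V} (hx : Matched M x) :
    Matched M' x :=
  let ⟨e, he, hxe⟩ := hx
  ⟨e, h he, hxe⟩

theorem IsMatching.union {M M' : Set (Sym2 V)} (hM : IsMatching G M) (hM' : IsMatching G M')
    (h : ∀ x, Matched M x → ¬ Matched M' x) : IsMatching G (M ∪ M') := by
  refine ⟨Set.union_subset hM.1 hM'.1, ?_⟩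
  rintro e (he | he) f (hf | hf) hef x hxe hxf
  · exact hM.2 e he f hf hef x hxe hxf
  · exact h x ⟨e, he, hxe⟩ ⟨f, hf, hxf⟩
  · exact h x ⟨f, hf, hxf⟩ ⟨e, he, hxe⟩
  · exact hM'.2 e he f hf hef x hxe hxf

theorem IsMatching.image_sym2Map {W : Type*} {H : SimpleGraph W} {f : W → V}
    (hf : Function.Injective f) {N : Set (Sym2 W)} (hN : IsMatching H N)
    (hG : ∀ e ∈ N, Sym2.map f e ∈ G.edgeSet) : IsMatching G (Sym2.map f '' N) := by
  refine ⟨by rintro _ ⟨e, he, rfl⟩; exact hG e he, ?_⟩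
  rintro _ ⟨e, he, rfl⟩ _ ⟨e', he', rfl⟩ hne x hx hx'
  obtain ⟨y, hy, rfl⟩ := Sym2.mem_map.1 hx
  obtain ⟨y', hy', hyy'⟩ := Sym2.mem_map.1 hx'
  rw [hf hyy'] at hy'
  exact hN.2 e he e' he' (fun h => hne (h ▸ rfl)) y hy hy'

namespace SimpleGraph.Walk

theorem IsCycle.exists_nearPerfectMatching_of_start {a : V} {d : G.Walk a a} (hd : d.IsCycle)
    {k : ℕ} (hk : d.length = 2 * k + 1) :
    ∃ M : Set (Sym2 V), IsMatching G M ∧ (∀ e ∈ M, e ∈ d.edges) ∧ M.ncard = k ∧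
      ∀ x, Matched M x ↔ x ∈ d.support ∧ x ≠ a := by
  have hinj : ∀ {i j}, i ≤ 2 * k → j ≤ 2 * k → d.getVert i = d.getVert j → i = j :=
    fun hi hj h => hd.getVert_injOn' (by simp; omega) (by simp; omega) h
  set edge : ℕ → Sym2 V := fun i => s(d.getVert (2 * i + 1), d.getVert (2 * i + 2))
  have hedge : ∀ i < k, edge i ∈ d.edges := fun i hi =>
    d.mk_mem_edges_iff_exists.2 ⟨2 * i + 1, by omega, rfl⟩
  have hmem_edge : ∀ {i x}, i < k → x ∈ edge i →
      ∃ n, 1 ≤ n ∧ n ≤ 2 * k ∧ (n - 1) / 2 = i ∧ x = d.getVert n :=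
    fun {i x} hi hx => (Sym2.mem_iff.1 hx).elim
      (fun h => ⟨2 * i + 1, by omega, by omega, by omega, h⟩)
      (fun h => ⟨2 * i + 2, by omega, by omega, by omega, h⟩)
  refine ⟨edge '' Set.Iio k, ⟨?_, ?_⟩, ?_, ?_, ?_⟩
  · rintro _ ⟨i, hi, rfl⟩
    exact d.edges_subset_edgeSet (hedge i hi)
  · rintro _ ⟨i, hi, rfl⟩ _ ⟨j, hj, rfl⟩ hij x hxi hxj
    obtain ⟨n, -, hn, rfl, rfl⟩ := hmem_edge hi hxi
    obtain ⟨m, -, hm, rfl, h⟩ := hmem_edge hj hxj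
    exact hij (by rw [hinj hn hm h])
  · rintro _ ⟨i, hi, rfl⟩
    exact hedge i hi
  · rw [Set.InjOn.ncard_image, Set.ncard_Iio_nat]
    intro i hi j hj h
    have hx : d.getVert (2 * i + 1) ∈ edge j := h ▸ Sym2.mem_mk_left _ _
    obtain ⟨m, -, hm, rfl, hm'⟩ := hmem_edge hj hx
    have := hinj (by simp at hi; omega) hm hm'
    omega
  · intro x
    constructor
    · rintro ⟨_, ⟨i, hi, rfl⟩, hx⟩
      obtain ⟨n, hn1, hn, -, rfl⟩ := hmem_edge hi hx
      refine ⟨d.getVert_mem_support n, fun h => ?_⟩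
      have := hinj hn (Nat.zero_le _) (h.trans d.getVert_zero.symm)
      omega
    · rintro ⟨hx, hxa⟩
      obtain ⟨n, rfl, hn⟩ := d.mem_support_iff_exists_getVert.1 hx
      have hn0 : n ≠ 0 := by rintro rfl; exact hxa d.getVert_zero
      have hnl : n ≠ d.length := by rintro rfl; exact hxa d.getVert_length
      obtain ⟨m, rfl | rfl⟩ := Nat.even_or_odd' n
      · exact ⟨edge (m - 1), ⟨m - 1, by simp; omega, rfl⟩,
          Sym2.mem_iff.2 (Or.inr (by congr 1; omega))⟩
      · exact ⟨edge m, ⟨m, by simp; omega, rfl⟩, Sym2.mem_mk_left _ _⟩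

theorem IsCycle.exists_nearPerfectMatching {v a : V} {c : G.Walk v v} (hc : c.IsCycle) {k : ℕ}
    (hk : c.length = 2 * k + 1) (ha : a ∈ c.support) :
    ∃ M : Set (Sym2 V), IsMatching G M ∧ (∀ e ∈ M, e ∈ c.edges) ∧ M.ncard = k ∧
      ∀ x, Matched M x ↔ x ∈ c.support ∧ x ≠ a := by
  classical
  obtain ⟨M, hM, hME, hMk, hMx⟩ :=
    (hc.rotate ha).exists_nearPerfectMatching_of_start (by rw [length_rotate, hk])
  refine ⟨M, hM, fun e he => (c.rotate_edges a ha).mem_iff.1 (hME e he), hMk, fun x => ?_⟩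
  rw [hMx, mem_support_rotate_iff]

end SimpleGraph.Walk

section Contraction

variable {C : Set V}

open Classical in
noncomputable def contractVertex (C : Set V) (x : V) : Option {x : V // x ∉ C} :=
  if h : x ∈ C then none else some ⟨x, h⟩

def expandVertex (C : Set V) (a : V) : Option {x : V // x ∉ C} → V :=
  fun o => o.elim a Subtype.val

def expandEdges (C : Set V) (a : V) (N : Set (Sym2 (Option {x : V // x ∉ C}))) : Set (Sym2 V) :=
  Sym2.map (expandVertex C a) '' N

theorem contractEdges_eq_image (C : Set V) (M : Set (Sym2 V)) :
    contractEdges C M = Sym2.map (contractVertex C) '' {e ∈ M | ∃ x ∈ e, x ∉ C} := by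
  ext E
  constructor
  · rintro (⟨u, w, hu, hw, hM, rfl⟩ | ⟨u, c, hu, hc, hM, rfl⟩)
    · exact ⟨s(u, w), ⟨hM, u, Sym2.mem_mk_left _ _, hu⟩, by simp [contractVertex, hu, hw]⟩
    · exact ⟨s(u, c), ⟨hM, u, Sym2.mem_mk_left _ _, hu⟩,
        by simp [contractVertex, hu, hc, Sym2.eq_swap]⟩
  · rintro ⟨e, ⟨hM, x, hx, hxC⟩, rfl⟩
    induction e using Sym2.ind with | _ u w => ?_
    by_cases hu : u ∈ C <;> by_cases hw : w ∈ C
    · exact absurd (Sym2.mem_iff.1 hx) (by rintro (rfl | rfl) <;> contradiction)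
    · exact Or.inr ⟨w, u, hw, hu, Sym2.eq_swap ▸ hM, by simp [contractVertex, hu, hw]⟩
    · exact Or.inr ⟨u, w, hu, hw, hM, by simp [contractVertex, hu, hw]⟩
    · exact Or.inl ⟨u, w, hu, hw, hM, by simp [contractVertex, hu, hw]⟩

theorem contractVertex_expandVertex {a : V} (ha : a ∈ C) (o : Option {x : V // x ∉ C}) :
    contractVertex C (expandVertex C a o) = o := by
  rcases o with _ | ⟨u, hu⟩
  · simp [contractVertex, expandVertex, ha]
  · simp [contractVertex, expandVertex, hu]

theorem expandVertex_injective {a : V} (ha : a ∈ C) : Function.Injective (expandVertex C a) :=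
  Function.LeftInverse.injective (contractVertex_expandVertex ha)

theorem IsMatching.exists_mem_adj_of_contraction {N : Set (Sym2 (Option {x : V // x ∉ C}))}
    (hN : IsMatching (contraction G C) N) {a₀ : V} (ha₀ : a₀ ∈ C) :
    ∃ a ∈ C, ∀ u, s(none, some u) ∈ N → G.Adj u.1 a := by
  by_cases h : ∃ u, s(none, some u) ∈ N
  · obtain ⟨u, hu⟩ := h
    obtain ⟨a, ha, hua⟩ : ∃ c ∈ C, G.Adj u.1 c := hN.1 hu
    refine ⟨a, ha, fun w hw => ?_⟩
    have hwu : s(none, some w) = s(none, some u) := by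
      by_contra hne
      exact hN.2 _ hw _ hu hne none (Sym2.mem_mk_left _ _) (Sym2.mem_mk_left _ _)
    rwa [Option.some_injective _ (Sym2.congr_right.1 hwu)]
  · exact ⟨a₀, ha₀, fun u hu => (h ⟨u, hu⟩).elim⟩

theorem isMatching_expandEdges {a : V} (ha : a ∈ C) {N : Set (Sym2 (Option {x : V // x ∉ C}))}
    (hN : IsMatching (contraction G C) N) (hadj : ∀ u, s(none, some u) ∈ N → G.Adj u.1 a) :
    IsMatching G (expandEdges C a N) := by
  refine hN.image_sym2Map (expandVertex_injective ha) fun E hE => ?_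
  induction E using Sym2.ind with | _ x y => ?_
  have hxy : (contraction G C).Adj x y := hN.1 hE
  rcases x with _ | u <;> rcases y with _ | w
  · exact hxy.elim
  · exact (hadj w hE).symm
  · exact hadj u (Sym2.eq_swap ▸ hE)
  · exact hxy

theorem exists_notMem_of_mem_expandEdges {a : V} {N : Set (Sym2 (Option {x : V // x ∉ C}))}
    (hN : N ⊆ (contraction G C).edgeSet) {e : Sym2 V} (he : e ∈ expandEdges C a N) :
    ∃ x ∈ e, x ∉ C := by
  obtain ⟨E, hE, rfl⟩ := he
  induction E using Sym2.ind with | _ x y => ?_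
  rcases x with _ | u
  · rcases y with _ | w
    · exact (hN hE).elim
    · exact ⟨w, Sym2.mem_mk_right _ _, w.2⟩
  · exact ⟨u, Sym2.mem_mk_left _ _, u.2⟩

theorem notMem_or_eq_of_matched_expandEdges {a : V} {N : Set (Sym2 (Option {x : V // x ∉ C}))}
    {x : V} (hx : Matched (expandEdges C a N) x) : x ∉ C ∨ x = a := by
  obtain ⟨_, ⟨E, -, rfl⟩, hxE⟩ := hx
  obtain ⟨o, -, rfl⟩ := Sym2.mem_map.1 hxE
  rcases o with _ | u
  · exact Or.inr rfl
  · exact Or.inl u.2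

theorem matched_expandEdges_of_matched_none {a : V} {N : Set (Sym2 (Option {x : V // x ∉ C}))}
    (h : Matched N none) : Matched (expandEdges C a N) a :=
  let ⟨E, hE, hnone⟩ := h
  ⟨_, ⟨E, hE, rfl⟩, Sym2.mem_map.2 ⟨none, hnone, rfl⟩⟩

theorem ncard_expandEdges {a : V} (ha : a ∈ C) (N : Set (Sym2 (Option {x : V // x ∉ C}))) :
    (expandEdges C a N).ncard = N.ncard :=
  (Sym2.map.injective (expandVertex_injective ha)).injOn.ncard_image

theorem contractEdges_expandEdges {a : V} (ha : a ∈ C)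
    {N : Set (Sym2 (Option {x : V // x ∉ C}))} (hN : N ⊆ (contraction G C).edgeSet) : contractEdges C (expandEdges C a N) = N := by
  rw [contractEdges_eq_image,
    Set.sep_eq_self_iff_mem_true.2 fun e he => exists_notMem_of_mem_expandEdges hN he,
    expandEdges, Set.image_image]
  convert Set.image_id N using 2 with E
  rw [Sym2.map_map, show contractVertex C ∘ expandVertex C a = id from
    funext (contractVertex_expandVertex ha), Sym2.map_id, id]

theorem contractEdges_union_eq_left {M M' : Set (Sym2 V)} (h : ∀ e ∈ M', ∀ x ∈ e, x ∈ C) :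
    contractEdges C (M ∪ M') = contractEdges C M := by
  rw [contractEdges_eq_image, contractEdges_eq_image]
  congr 1
  ext e
  constructor
  · rintro ⟨he | he, x, hx, hxC⟩
    · exact ⟨he, x, hx, hxC⟩
    · exact absurd (h e he x hx) hxC
  · rintro ⟨he, hx⟩
    exact ⟨Or.inl he, hx⟩

end Contraction

end

theorem expand_matching {V : Type*} [Fintype V] (G : SimpleGraph V) {v : V}
    (c : G.Walk v v) (hc : c.IsCycle) (k : ℕ) (hk : c.length = 2 * k + 1)
    (N' : Set (Sym2 (Option {x : V // x ∉ {u | u ∈ c.support}})))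
    (hN' : IsMatching (contraction G {u | u ∈ c.support}) N') :
    ∃ N : Set (Sym2 V), IsMatching G N ∧
      contractEdges {u | u ∈ c.support} N = N' ∧
      (N ∩ {e | e ∈ c.edges}).ncard = k ∧
      (∀ e ∈ N, e ∈ c.edges ∨ ∃ x, x ∈ e ∧ x ∉ {u | u ∈ c.support}) ∧
      N.ncard = N'.ncard + k ∧
      (Matched N' none → ∀ u ∈ c.support, Matched N u) := by
  obtain ⟨a, ha, hadj⟩ := hN'.exists_mem_adj_of_contraction c.start_mem_support
  obtain ⟨Mc, hMc, hMcE, hMck, hMcx⟩ := hc.exists_nearPerfectMatching hk ha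
  set M := expandEdges {u | u ∈ c.support} a N'
  have hMout : ∀ e ∈ M, ∃ x ∈ e, x ∉ c.support := fun e he =>
    exists_notMem_of_mem_expandEdges hN'.1 he
  have hMcin : ∀ e ∈ Mc, ∀ x ∈ e, x ∈ c.support := fun e he x hx =>
    ((hMcx x).1 ⟨e, he, hx⟩).1
  have hdisj : Disjoint M Mc := Set.disjoint_left.2 fun e he he' =>
    let ⟨x, hx, hxC⟩ := hMout e he
    hxC (hMcin e he' x hx)
  have hcycle : (M ∪ Mc) ∩ {e | e ∈ c.edges} = Mc := by
    refine Set.Subset.antisymm ?_ fun e he => ⟨Or.inr he, hMcE e he⟩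
    rintro e ⟨he | he, hce⟩
    · obtain ⟨x, hx, hxC⟩ := hMout e he
      exact absurd (c.mem_support_of_mem_edges hce hx) hxC
    · exact he
  refine ⟨M ∪ Mc, (isMatching_expandEdges ha hN' hadj).union hMc fun x hxM hxMc => ?_,
    by rw [contractEdges_union_eq_left (C := {u | u ∈ c.support}) hMcin,
      contractEdges_expandEdges ha hN'.1],
    by rw [hcycle, hMck],
    fun e he => he.elim (fun he => Or.inr (hMout e he)) (fun he => Or.inl (hMcE e he)),
    by rw [Set.ncard_union_eq hdisj, ncard_expandEdges ha, hMck], fun hB u hu => ?_⟩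
  · obtain ⟨hxC, hxa⟩ := (hMcx x).1 hxMc
    exact (notMem_or_eq_of_matched_expandEdges hxM).elim (· hxC) hxa
  · by_cases hua : u = a
    · subst hua
      exact (matched_expandEdges_of_matched_none hB).mono Set.subset_union_left
    · exact ((hMcx u).2 ⟨hu, hua⟩).mono Set.subset_union_right
end

section
/- Let G be a finite simple graph, let M̂ be a regal matching on the crown Crown(G), and let m be an M̂-unmatched monde vertex. If there exists an M̂-augmenting path in Crown(G), then there exists an M̂-alternating cycle rooted at m; that is, a closed walk at m of odd length with pairwise distinct edges, visiting no vertex other than m twice, whose edges alternate between not in M̂ and in M̂, beginning and ending with edges not in M̂. -/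
/-- The crown of `G`: three disjoint copies of the vertex set of `G` — the circlet
(`Sum.inl`), the arches (`Sum.inr ∘ Sum.inl`) and the monde (`Sum.inr ∘ Sum.inr`).  Two
circlet vertices are adjacent iff the corresponding vertices are adjacent in `G`; each
circlet vertex is adjacent to its own arch copy; every arch vertex is adjacent to every
monde vertex; there are no other edges. -/
def crown {V : Type*} (G : SimpleGraph V) : SimpleGraph (V ⊕ V ⊕ V) where
  Adj x y :=
    match x, y with
    | Sum.inl u, Sum.inl w => G.Adj u w
    | Sum.inl u, Sum.inr (Sum.inl w) => u = w
    | Sum.inr (Sum.inl u), Sum.inl w => u = w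
    | Sum.inr (Sum.inl _), Sum.inr (Sum.inr _) => True
    | Sum.inr (Sum.inr _), Sum.inr (Sum.inl _) => True
    | _, _ => False
  symm := ⟨by
    rintro (u | u | u) (w | w | w) h <;>
      first
        | exact G.adj_symm h
        | exact Eq.symm h
        | exact False.elim h
        | trivial⟩
  loopless := ⟨by
    rintro (u | u | u) h
    · exact G.irrefl h
    · exact False.elim h
    · exact False.elim h⟩

/-- A matching on the crown is regal if every circlet vertex and every arch vertex is
matched. -/
def IsRegal {V : Type*} (Mh : Set (Sym2 (V ⊕ V ⊕ V))) : Prop :=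
  (∀ u : V, Matched Mh (Sum.inl u)) ∧ (∀ u : V, Matched Mh (Sum.inr (Sum.inl u)))

/-- An `M`-augmenting path: a path with at least one edge, whose edges alternate between
not in `M` and in `M`, and whose endpoints are `M`-unmatched. -/
def IsAugPath {V : Type*} (G : SimpleGraph V) (M : Set (Sym2 V)) {a b : V}
    (p : G.Walk a b) : Prop :=
  p.IsPath ∧ p.edges ≠ [] ∧
    List.Chain' (fun e f => (e ∈ M ↔ f ∉ M)) p.edges ∧
    ¬ Matched M a ∧ ¬ Matched M b

/-- An `M`-alternating cycle rooted at `v`: a closed walk at `v` of odd length with pairwise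
distinct edges, visiting no vertex other than `v` twice, whose edges alternate between not
in `M` and in `M`, beginning and ending with edges not in `M` (the `i`-th edge lies in `M`
exactly when `i` is odd). -/
def IsAltCycle {V : Type*} (G : SimpleGraph V) (M : Set (Sym2 V)) {v : V}
    (c : G.Walk v v) : Prop :=
  c.IsCycle ∧ Odd c.length ∧
    ∀ (i : ℕ) (h : i < c.edges.length), (c.edges.get ⟨i, h⟩ ∈ M ↔ Odd i)

/-
The endpoints of an augmenting path are unmatched, so for a regal matching they are monde
vertices; their neighbours on the path are arches, and every arch is adjacent to `m`. Replacing
the first and last edge of the path by edges to `m` closes it into a cycle at `m`: the interior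
of the path consists of matched vertices and so avoids the unmatched `m`, the interior edges keep
alternating, and the path has odd length since it alternates and begins and ends outside `M̂`.
-/

namespace List

variable {α : Type*} {M : Set α}

theorem getElem_mem_iff_odd_of_isChain {l : List α}
    (hl : l.IsChain (fun e f => e ∈ M ↔ f ∉ M)) (hhead : ∀ e ∈ l.head?, e ∉ M) :
    ∀ (i : ℕ) (hi : i < l.length), l[i] ∈ M ↔ Odd i
  | 0, hi => iff_of_false (hhead _ (by simp [head?_eq_getElem?, hi])) (by simp)
  | i + 1, hi => by
    rw [Nat.odd_add_one, ← getElem_mem_iff_odd_of_isChain hl hhead i (by omega)]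
    exact iff_not_comm.mp (isChain_iff_getElem.mp hl i hi)

theorem odd_length_of_isChain {l : List α} (hl : l.IsChain (fun e f => e ∈ M ↔ f ∉ M))
    (hne : l ≠ []) (hhead : ∀ e ∈ l.head?, e ∉ M) (hlast : l.getLast hne ∉ M) :
    Odd l.length := by
  have hpos := length_pos_iff.mpr hne
  have hparity := getElem_mem_iff_odd_of_isChain hl hhead (l.length - 1) (by omega)
  rw [← getLast_eq_getElem hne] at hparity
  have heven : ¬Odd (l.length - 1) := fun h => hlast (hparity.mpr h)
  rw [Nat.odd_iff] at heven ⊢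
  omega

theorem isChain_cons_append_singleton_of_not_mem {a b a' b' : α} {l : List α}
    (hl : (a :: (l ++ [b])).IsChain (fun e f => e ∈ M ↔ f ∉ M))
    (ha : a ∉ M) (hb : b ∉ M) (ha' : a' ∉ M) (hb' : b' ∉ M) :
    (a' :: (l ++ [b'])).IsChain (fun e f => e ∈ M ↔ f ∉ M) := by
  have hmap : (a' :: (l ++ [b'])).map (· ∈ M) = (a :: (l ++ [b])).map (· ∈ M) := by
    simp [ha, hb, ha', hb']
  exact (isChain_map (R := fun p q : Prop => p ↔ ¬q) (· ∈ M)).mp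
    (hmap ▸ (isChain_map (R := fun p q : Prop => p ↔ ¬q) (· ∈ M)).mpr hl)

end List

theorem not_mem_of_not_matched {V : Type*} {M : Set (Sym2 V)} {v : V} {e : Sym2 V}
    (hv : ¬Matched M v) (he : v ∈ e) : e ∉ M :=
  fun heM => hv ⟨e, heM, he⟩

theorem matched_of_mem_iff_not_mem {V : Type*} {M : Set (Sym2 V)} {a u c : V}
    (h : s(a, u) ∈ M ↔ s(u, c) ∉ M) : Matched M u := by
  by_cases hau : s(a, u) ∈ M
  · exact ⟨_, hau, Sym2.mem_mk_right a u⟩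
  · exact ⟨_, not_not.mp (mt h.mpr hau), Sym2.mem_mk_left u c⟩

namespace SimpleGraph.Walk

variable {V : Type*} {G : SimpleGraph V}

theorem exists_eq_cons_concat {u v : V} (p : G.Walk u v) (hp : 2 ≤ p.length) :
    ∃ (u₁ u₂ : V) (h₀ : G.Adj u u₁) (r : G.Walk u₁ u₂) (h₁ : G.Adj u₂ v),
      p = cons h₀ (r.concat h₁) := by
  rcases p with _ | ⟨h₀, _ | ⟨h, q⟩⟩
  · simp at hp
  · simp at hp
  · obtain ⟨_, r, h₁, hq⟩ := exists_cons_eq_concat h q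
    exact ⟨_, _, h₀, r, h₁, by rw [hq]⟩

theorem edges_cons_concat {a u w b : V} (h₀ : G.Adj a u) (r : G.Walk u w) (h₁ : G.Adj w b) :
    (cons h₀ (r.concat h₁)).edges = s(a, u) :: (r.edges ++ [s(w, b)]) := by
  simp [edges_concat]

theorem matched_of_mem_support_of_isChain {M : Set (Sym2 V)} {a u w b : V} (h₀ : G.Adj a u)
    (r : G.Walk u w) (h₁ : G.Adj w b)
    (hr : (cons h₀ (r.concat h₁)).edges.IsChain (fun e f => e ∈ M ↔ f ∉ M))
    {x : V} (hx : x ∈ r.support) : Matched M x := by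
  induction r generalizing a with
  | nil =>
    rw [support_nil, List.mem_singleton] at hx
    subst hx
    exact matched_of_mem_iff_not_mem (List.isChain_cons_cons.mp hr).1
  | cons h r ih =>
    rw [support_cons, List.mem_cons] at hx
    rcases hx with rfl | hx
    · exact matched_of_mem_iff_not_mem (List.isChain_cons_cons.mp hr).1
    · exact ih h h₁ (List.isChain_cons_cons.mp hr).2 hx

theorem isAltCycle_cons_concat_of_isAugPath {M : Set (Sym2 V)} {a b u₁ u₂ v : V}
    {h₀ : G.Adj a u₁} {r : G.Walk u₁ u₂} {h₁ : G.Adj u₂ b}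
    (hp : IsAugPath G M (.cons h₀ (r.concat h₁))) (hv : ¬Matched M v)
    (hvu₁ : G.Adj v u₁) (hu₂v : G.Adj u₂ v) :
    IsAltCycle G M (.cons hvu₁ (r.concat hu₂v)) := by
  obtain ⟨hpath, -, hchain, ha, hb⟩ := hp
  have hvr : v ∉ r.support := fun hx =>
    hv (r.matched_of_mem_support_of_isChain h₀ h₁ hchain hx)
  rw [edges_cons_concat] at hchain
  have hce := edges_cons_concat hvu₁ r hu₂v
  have hfirst : s(v, u₁) ∉ M := not_mem_of_not_matched hv (Sym2.mem_mk_left _ _)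
  have hlast : s(u₂, v) ∉ M := not_mem_of_not_matched hv (Sym2.mem_mk_right _ _)
  have hchain' : (cons hvu₁ (r.concat hu₂v)).edges.IsChain (fun e f => e ∈ M ↔ f ∉ M) := by
    rw [hce]
    exact List.isChain_cons_append_singleton_of_not_mem hchain
      (not_mem_of_not_matched ha (Sym2.mem_mk_left _ _))
      (not_mem_of_not_matched hb (Sym2.mem_mk_right _ _)) hfirst hlast
  have hhead : ∀ e ∈ (cons hvu₁ (r.concat hu₂v)).edges.head?, e ∉ M := by
    simpa [hce] using hfirst
  have hodd : Odd (cons hvu₁ (r.concat hu₂v)).length := by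
    rw [← length_edges]
    exact List.odd_length_of_isChain hchain' (by simp [hce]) hhead (by simpa [hce] using hlast)
  refine ⟨?_, hodd, List.getElem_mem_iff_odd_of_isChain hchain' hhead⟩
  have hrpath : r.IsPath := ((concat_isPath_iff _).mp hpath.of_cons).1
  have hu : u₁ ≠ u₂ := by
    rintro rfl
    rw [isPath_iff_nil] at hrpath
    simp [hrpath.eq_nil, Nat.odd_iff] at hodd
  rw [cons_isCycle_iff, edges_concat, List.concat_eq_append,
    List.mem_append, List.mem_singleton, not_or, Sym2.eq_iff]
  refine ⟨hrpath.concat hvr hu₂v, fun he => hvr (r.fst_mem_support_of_mem_edges he), ?_⟩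
  rintro (⟨rfl, -⟩ | ⟨-, rfl⟩)
  · exact hvr r.end_mem_support
  · exact hu rfl

end SimpleGraph.Walk

theorem IsRegal.exists_eq_monde_of_not_matched {V : Type*} {M : Set (Sym2 (V ⊕ V ⊕ V))}
    (hM : IsRegal M) {w : V ⊕ V ⊕ V} (hw : ¬Matched M w) : ∃ x, w = Sum.inr (Sum.inr x) := by
  rcases w with u | u | x
  · exact absurd (hM.1 u) hw
  · exact absurd (hM.2 u) hw
  · exact ⟨x, rfl⟩

namespace crown

variable {V : Type*} {G : SimpleGraph V}

theorem adj_monde_of_adj_monde {x y : V} {w : V ⊕ V ⊕ V}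
    (h : (crown G).Adj (Sum.inr (Sum.inr x)) w) : (crown G).Adj (Sum.inr (Sum.inr y)) w := by
  rcases w with u | u | u <;> exact h

theorem two_le_length_of_walk_monde {x y : V}
    (p : (crown G).Walk (Sum.inr (Sum.inr x)) (Sum.inr (Sum.inr y))) (hp : p.edges ≠ []) :
    2 ≤ p.length := by
  rcases p with _ | ⟨h, _ | _⟩
  · simp at hp
  · exact h.elim -- no two monde vertices are adjacent
  · simp

end crown

theorem crown_altCycle_of_augPath_general {V : Type*} (G : SimpleGraph V)
    (Mh : Set (Sym2 (V ⊕ V ⊕ V))) (hreg : IsRegal Mh)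
    (m : V) (hm : ¬ Matched Mh (Sum.inr (Sum.inr m)))
    (h : ∃ (a b : V ⊕ V ⊕ V) (p : (crown G).Walk a b), IsAugPath (crown G) Mh p) :
    ∃ c : (crown G).Walk (Sum.inr (Sum.inr m)) (Sum.inr (Sum.inr m)),
      IsAltCycle (crown G) Mh c := by
  obtain ⟨a, b, p, hp⟩ := h
  obtain ⟨x, rfl⟩ := hreg.exists_eq_monde_of_not_matched hp.2.2.2.1
  obtain ⟨y, rfl⟩ := hreg.exists_eq_monde_of_not_matched hp.2.2.2.2
  obtain ⟨u₁, u₂, h₀, r, h₁, rfl⟩ :=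
    p.exists_eq_cons_concat (crown.two_le_length_of_walk_monde p hp.2.1)
  exact ⟨_, SimpleGraph.Walk.isAltCycle_cons_concat_of_isAugPath hp hm
    (crown.adj_monde_of_adj_monde h₀) (crown.adj_monde_of_adj_monde h₁.symm).symm⟩

theorem crown_altCycle_of_augPath {V : Type*} [Fintype V] (G : SimpleGraph V)
    (Mh : Set (Sym2 (V ⊕ V ⊕ V))) (hMh : IsMatching (crown G) Mh) (hreg : IsRegal Mh)
    (m : V) (hm : ¬ Matched Mh (Sum.inr (Sum.inr m)))
    (h : ∃ (a b : V ⊕ V ⊕ V) (p : (crown G).Walk a b), IsAugPath (crown G) Mh p) :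
    ∃ c : (crown G).Walk (Sum.inr (Sum.inr m)) (Sum.inr (Sum.inr m)),
      IsAltCycle (crown G) Mh c :=
  crown_altCycle_of_augPath_general G Mh hreg m hm h
end
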